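/- arXiv:1002.2716 — 2 statements merged into one kernel-verified Lean document; each statement's English description precedes it below -/
import Mathlib

section
/- Under the hypotheses of the previous lemma (weighted degenerate elliptic problem on (−1,1)), the maximum principle holds: if f ≤ 0 almost everywhere then the unique weak solution g satisfies g ≤ 0 almost everywhere, and if f ≥ 0 a.e. then g ≥ 0 a.e. -/
open MeasureTheory Set Real

/-- Membership in the weighted space `V`. -/
def InWeightedV (g g' : ℝ → ℝ) : Prop :=
  (∀ μ ∈ Set.Ioo (-1:ℝ) 1, HasDerivAt g (g' μ) μ) ∧
  MeasureTheory.IntegrableOn (fun μ => g μ ^ 2 / (1 - μ ^ 2)) (Set.Ioo (-1) 1) ∧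
  MeasureTheory.IntegrableOn (fun μ => (1 - μ ^ 2) * g' μ ^ 2) (Set.Ioo (-1) 1)

/-- Weak solution of `−(1−μ²)∂_μ(e^{σ/d}(1−μ²)∂_μ g) + α g = f` on `(−1,1)`. -/
def IsWeakSol (σ : ℝ → ℝ) (d : ℝ) (α f g g' : ℝ → ℝ) : Prop :=
  InWeightedV g g' ∧
  ∀ v v' : ℝ → ℝ, InWeightedV v v' →
    (∫ μ in Set.Ioo (-1:ℝ) 1, Real.exp (σ μ / d) * (1 - μ ^ 2) * g' μ * v' μ)
      + (∫ μ in Set.Ioo (-1:ℝ) 1, α μ * g μ * v μ / (1 - μ ^ 2))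
      = ∫ μ in Set.Ioo (-1:ℝ) 1, f μ * v μ / (1 - μ ^ 2)

/-!
Test the weak formulation with `φ(g)`, where `φ(t) = √((t⁺)² + 1) - 1` is a `C¹` substitute for the
positive part: `g⁺` itself is not differentiable where `g` vanishes, so it is not in `V` as defined
pointwise here, while `|φ(t)| ≤ |t|` and `0 ≤ φ' ≤ 1` keep `φ(g)` in `V`. The diffusion term is
then nonnegative and, for `f ≤ 0`, the right-hand side nonpositive, so the nonnegative reaction
term `∫ α g φ(g) / (1 - μ²)` vanishes; as `α > 0`, `g φ(g) = 0` a.e., i.e. `g ≤ 0` a.e.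
For `f ≥ 0` apply this to `-g`.
-/

lemma hasDerivAt_max_zero_sq (t : ℝ) : HasDerivAt (fun s => max s 0 ^ 2) (2 * max t 0) t := by
  rcases lt_trichotomy t 0 with ht | rfl | ht
  · have heq : (fun s : ℝ => max s 0 ^ 2) =ᶠ[nhds t] fun _ => 0 := by
      filter_upwards [eventually_lt_nhds ht] with s hs
      simp [max_eq_right hs.le]
    rw [max_eq_right ht.le, mul_zero]
    exact (hasDerivAt_const t 0).congr_of_eventuallyEq heq
  · rw [hasDerivAt_iff_isLittleO]
    simp only [max_self, mul_zero, smul_zero, sub_zero, zero_pow two_ne_zero]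
    refine (Asymptotics.isBigO_of_le _ fun s => ?_).trans_isLittleO
      (Asymptotics.isLittleO_pow_id one_lt_two)
    simp only [norm_pow, Real.norm_eq_abs]
    refine pow_le_pow_left₀ (abs_nonneg _) ?_ 2
    rw [abs_of_nonneg (le_max_right s 0)]
    exact max_le (le_abs_self s) (abs_nonneg s)
  · have heq : (fun s : ℝ => max s 0 ^ 2) =ᶠ[nhds t] fun s => s ^ 2 := by
      filter_upwards [eventually_gt_nhds ht] with s hs
      simp [max_eq_left hs.le]
    rw [max_eq_left ht.le]
    simpa [mul_comm] using (hasDerivAt_pow 2 t).congr_of_eventuallyEq heq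

noncomputable def softPosPart (t : ℝ) : ℝ := √(max t 0 ^ 2 + 1) - 1

noncomputable def softPosPartDeriv (t : ℝ) : ℝ := max t 0 / √(max t 0 ^ 2 + 1)

lemma hasDerivAt_softPosPart (t : ℝ) : HasDerivAt softPosPart (softPosPartDeriv t) t := by
  have hne : max t 0 ^ 2 + 1 ≠ 0 := by positivity
  refine ((((hasDerivAt_max_zero_sq t).add_const 1).sqrt hne).sub_const 1).congr_deriv ?_
  rw [softPosPartDeriv]
  field_simp

lemma continuous_softPosPartDeriv : Continuous softPosPartDeriv :=
  have hmax : Continuous fun t : ℝ => max t 0 := continuous_id.max continuous_const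
  hmax.div (hmax.pow 2 |>.add continuous_const).sqrt fun _ => (Real.sqrt_pos.2 (by positivity)).ne'

lemma softPosPart_of_nonpos {t : ℝ} (ht : t ≤ 0) : softPosPart t = 0 := by
  simp [softPosPart, max_eq_right ht]

lemma softPosPart_pos {t : ℝ} (ht : 0 < t) : 0 < softPosPart t := by
  have : 1 < √(max t 0 ^ 2 + 1) := by
    rw [Real.lt_sqrt zero_le_one, max_eq_left ht.le]
    nlinarith
  rw [softPosPart]
  linarith

lemma softPosPart_nonneg (t : ℝ) : 0 ≤ softPosPart t := by
  rcases le_or_gt t 0 with ht | ht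
  · exact (softPosPart_of_nonpos ht).ge
  · exact (softPosPart_pos ht).le

lemma abs_softPosPart_le (t : ℝ) : |softPosPart t| ≤ |t| := by
  have hmax : 0 ≤ max t 0 := le_max_right t 0
  have : √(max t 0 ^ 2 + 1) ≤ max t 0 + 1 := by
    rw [Real.sqrt_le_left (by linarith)]
    nlinarith
  have : max t 0 ≤ |t| := max_le (le_abs_self t) (abs_nonneg t)
  rw [abs_of_nonneg (softPosPart_nonneg t), softPosPart]
  linarith

lemma softPosPartDeriv_nonneg (t : ℝ) : 0 ≤ softPosPartDeriv t :=
  div_nonneg (le_max_right t 0) (Real.sqrt_nonneg _)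

lemma abs_softPosPartDeriv_le_one (t : ℝ) : |softPosPartDeriv t| ≤ 1 := by
  rw [abs_of_nonneg (softPosPartDeriv_nonneg t), softPosPartDeriv,
    div_le_one (Real.sqrt_pos.2 (by positivity)), Real.le_sqrt (le_max_right t 0) (by positivity)]
  linarith

lemma mul_softPosPart_nonneg (t : ℝ) : 0 ≤ t * softPosPart t := by
  rcases le_or_gt t 0 with ht | ht
  · simp [softPosPart_of_nonpos ht]
  · exact mul_nonneg ht.le (softPosPart_nonneg t)

lemma one_sub_sq_pos_of_mem_Ioo {μ : ℝ} (hμ : μ ∈ Ioo (-1 : ℝ) 1) : 0 < 1 - μ ^ 2 := by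
  obtain ⟨h₁, h₂⟩ := hμ
  nlinarith

namespace InWeightedV

variable {g g' : ℝ → ℝ}

lemma aemeasurable (hg : InWeightedV g g') : AEMeasurable g (volume.restrict (Ioo (-1) 1)) :=
  ContinuousOn.aemeasurable (fun μ hμ => (hg.1 μ hμ).continuousAt.continuousWithinAt)
    measurableSet_Ioo

lemma aemeasurable_deriv (hg : InWeightedV g g') :
    AEMeasurable g' (volume.restrict (Ioo (-1) 1)) :=
  (measurable_deriv g).aemeasurable.congr <|
    (ae_restrict_mem measurableSet_Ioo).mono fun μ hμ => (hg.1 μ hμ).deriv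

lemma neg (hg : InWeightedV g g') : InWeightedV (-g) (-g') :=
  ⟨fun μ hμ => (hg.1 μ hμ).neg, by simpa using hg.2.1, by simpa using hg.2.2⟩

lemma comp {φ φ' : ℝ → ℝ} (hg : InWeightedV g g') (hφ : ∀ t, HasDerivAt φ (φ' t) t)
    (hφ'_meas : Measurable φ') (hφ_le : ∀ t, |φ t| ≤ |t|) (hφ'_le : ∀ t, |φ' t| ≤ 1) :
    InWeightedV (fun μ => φ (g μ)) (fun μ => φ' (g μ) * g' μ) := by
  have hφg : AEMeasurable (fun μ => φ (g μ)) (volume.restrict (Ioo (-1) 1)) :=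
    (continuous_iff_continuousAt.2 fun t => (hφ t).continuousAt).measurable.comp_aemeasurable
      hg.aemeasurable
  refine ⟨fun μ hμ => (hφ (g μ)).comp μ (hg.1 μ hμ), Integrable.mono hg.2.1 ?_ ?_,
    Integrable.mono hg.2.2 ?_ ?_⟩
  · exact (hφg.pow_const 2 |>.div (by fun_prop)).aestronglyMeasurable
  · refine ae_of_all _ fun μ => ?_
    simp only [Real.norm_eq_abs, abs_div, abs_sq]
    exact div_le_div_of_nonneg_right (sq_le_sq.2 (hφ_le _)) (abs_nonneg _)
  · exact ((by fun_prop : AEMeasurable (fun μ : ℝ => 1 - μ ^ 2) _).mul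
      ((hφ'_meas.comp_aemeasurable hg.aemeasurable).mul hg.aemeasurable_deriv |>.pow_const 2))
      |>.aestronglyMeasurable
  · refine ae_of_all _ fun μ => ?_
    simp only [Real.norm_eq_abs, abs_mul, abs_sq]
    refine mul_le_mul_of_nonneg_left (sq_le_sq.2 ?_) (abs_nonneg _)
    rw [abs_mul]
    exact mul_le_of_le_one_left (abs_nonneg _) (hφ'_le _)

lemma integrableOn_mul_mul_div {v v' α : ℝ → ℝ} (hg : InWeightedV g g') (hv : InWeightedV v v')
    (hα_meas : Measurable α)
    (hα_bdd : ∃ C, ∀ᵐ μ ∂(volume.restrict (Ioo (-1 : ℝ) 1)), |α μ| ≤ C) :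
    IntegrableOn (fun μ => α μ * g μ * v μ / (1 - μ ^ 2)) (Ioo (-1) 1) := by
  obtain ⟨C, hC⟩ := hα_bdd
  refine Integrable.mono' ((hg.2.1.add hv.2.1).const_mul C) ?_ ?_
  · exact ((hα_meas.aemeasurable.mul hg.aemeasurable).mul hv.aemeasurable
      |>.div (by fun_prop)).aestronglyMeasurable
  · filter_upwards [hC, ae_restrict_mem measurableSet_Ioo] with μ hαμ hμ
    have hpos := one_sub_sq_pos_of_mem_Ioo hμ
    have hgv : |g μ| * |v μ| ≤ g μ ^ 2 + v μ ^ 2 := by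
      nlinarith [sq_abs (g μ), sq_abs (v μ), abs_nonneg (g μ), abs_nonneg (v μ)]
    rw [Real.norm_eq_abs, abs_div, abs_of_pos hpos, abs_mul, abs_mul, mul_assoc, Pi.add_apply,
      ← add_div, ← mul_div_assoc]
    exact div_le_div_of_nonneg_right
      (mul_le_mul hαμ hgv (by positivity) ((abs_nonneg _).trans hαμ)) hpos.le

end InWeightedV

namespace IsWeakSol

variable {σ : ℝ → ℝ} {d : ℝ} {α f g g' : ℝ → ℝ}

lemma neg (hsol : IsWeakSol σ d α f g g') : IsWeakSol σ d α (-f) (-g) (-g') := by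
  refine ⟨hsol.1.neg, fun v v' hv => ?_⟩
  simp only [Pi.neg_apply, mul_neg, neg_mul, neg_div, integral_neg]
  linarith [hsol.2 v v' hv]

theorem ae_nonpos_of_ae_nonpos (hsol : IsWeakSol σ d α f g g') (hα_meas : Measurable α)
    (hα_bdd : ∃ C, ∀ᵐ μ ∂(volume.restrict (Ioo (-1 : ℝ) 1)), |α μ| ≤ C)
    (hα_pos : ∀ᵐ μ ∂(volume.restrict (Ioo (-1 : ℝ) 1)), 0 < α μ)
    (hf : ∀ᵐ μ ∂(volume.restrict (Ioo (-1 : ℝ) 1)), f μ ≤ 0) :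
    ∀ᵐ μ ∂(volume.restrict (Ioo (-1 : ℝ) 1)), g μ ≤ 0 := by
  obtain ⟨hg, hweak⟩ := hsol
  have hv := hg.comp hasDerivAt_softPosPart continuous_softPosPartDeriv.measurable
    abs_softPosPart_le abs_softPosPartDeriv_le_one
  have hdiffusion : 0 ≤ ∫ μ in Ioo (-1 : ℝ) 1,
      exp (σ μ / d) * (1 - μ ^ 2) * g' μ * (softPosPartDeriv (g μ) * g' μ) := by
    refine setIntegral_nonneg measurableSet_Ioo fun μ hμ => ?_
    have hweight := one_sub_sq_pos_of_mem_Ioo hμ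
    have hφ' := softPosPartDeriv_nonneg (g μ)
    rw [show exp (σ μ / d) * (1 - μ ^ 2) * g' μ * (softPosPartDeriv (g μ) * g' μ)
      = exp (σ μ / d) * (1 - μ ^ 2) * softPosPartDeriv (g μ) * g' μ ^ 2 by ring]
    positivity
  have hsource : ∫ μ in Ioo (-1 : ℝ) 1, f μ * softPosPart (g μ) / (1 - μ ^ 2) ≤ 0 := by
    refine integral_nonpos_of_ae ?_
    filter_upwards [hf, ae_restrict_mem measurableSet_Ioo] with μ hfμ hμ
    exact div_nonpos_of_nonpos_of_nonneg
      (mul_nonpos_of_nonpos_of_nonneg hfμ (softPosPart_nonneg _)) (one_sub_sq_pos_of_mem_Ioo hμ).le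
  have hreaction : 0 ≤ᵐ[volume.restrict (Ioo (-1 : ℝ) 1)]
      fun μ => α μ * g μ * softPosPart (g μ) / (1 - μ ^ 2) := by
    filter_upwards [hα_pos, ae_restrict_mem measurableSet_Ioo] with μ hαμ hμ
    rw [Pi.zero_apply, mul_assoc]
    exact div_nonneg (mul_nonneg hαμ.le (mul_softPosPart_nonneg _)) (one_sub_sq_pos_of_mem_Ioo hμ).le
  have hreaction_zero := (integral_eq_zero_iff_of_nonneg_ae hreaction
    (hg.integrableOn_mul_mul_div hv hα_meas hα_bdd)).1
    (le_antisymm (by linarith [hweak _ _ hv]) (integral_nonneg_of_ae hreaction))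
  filter_upwards [hreaction_zero, hα_pos, ae_restrict_mem measurableSet_Ioo] with μ hzero hαμ hμ
  have hprod := (div_eq_zero_iff.1 hzero).resolve_right (one_sub_sq_pos_of_mem_Ioo hμ).ne'
  rw [mul_assoc] at hprod
  exact not_lt.1 fun hgμ =>
    (mul_ne_zero hαμ.ne' (mul_pos hgμ (softPosPart_pos hgμ)).ne') hprod

end IsWeakSol

theorem stmt11_general (σ : ℝ → ℝ)
    (d α₀ : ℝ) (hα₀ : 0 < α₀)
    (α : ℝ → ℝ) (hα_meas : Measurable α)
    (hα_bdd : ∃ Cb : ℝ, ∀ᵐ μ ∂(volume.restrict (Set.Ioo (-1:ℝ) 1)), |α μ| ≤ Cb)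
    (hα_lb : ∀ᵐ μ ∂(volume.restrict (Set.Ioo (-1:ℝ) 1)), α₀ ≤ α μ)
    (f : ℝ → ℝ)
    (g g' : ℝ → ℝ) (hsol : IsWeakSol σ d α f g g') :
    ((∀ᵐ μ ∂(volume.restrict (Set.Ioo (-1:ℝ) 1)), f μ ≤ 0) →
      (∀ᵐ μ ∂(volume.restrict (Set.Ioo (-1:ℝ) 1)), g μ ≤ 0)) ∧
    ((∀ᵐ μ ∂(volume.restrict (Set.Ioo (-1:ℝ) 1)), 0 ≤ f μ) →
      (∀ᵐ μ ∂(volume.restrict (Set.Ioo (-1:ℝ) 1)), 0 ≤ g μ)) := by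
  have hα_pos := hα_lb.mono fun μ hμ => hα₀.trans_le hμ
  refine ⟨hsol.ae_nonpos_of_ae_nonpos hα_meas hα_bdd hα_pos, fun hf => ?_⟩
  have hneg := hsol.neg.ae_nonpos_of_ae_nonpos hα_meas hα_bdd hα_pos
    (hf.mono fun μ hμ => neg_nonpos.2 hμ)
  exact hneg.mono fun μ hμ => neg_nonpos.1 hμ

/-- Maximum principle for the degenerate elliptic problem: if `f ≤ 0` a.e. then
the weak solution satisfies `g ≤ 0` a.e., and if `f ≥ 0` a.e. then `g ≥ 0` a.e. -/
theorem stmt11 (σ : ℝ → ℝ) (hσ : ContinuousOn σ (Set.Icc (-1) 1))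
    (d α₀ : ℝ) (hd : 0 < d) (hα₀ : 0 < α₀)
    (α : ℝ → ℝ) (hα_meas : Measurable α)
    (hα_bdd : ∃ Cb : ℝ, ∀ᵐ μ ∂(volume.restrict (Set.Ioo (-1:ℝ) 1)), |α μ| ≤ Cb)
    (hα_lb : ∀ᵐ μ ∂(volume.restrict (Set.Ioo (-1:ℝ) 1)), α₀ ≤ α μ)
    (f : ℝ → ℝ) (hf_meas : Measurable f)
    (hf : MeasureTheory.IntegrableOn (fun μ => f μ ^ 2 / (1 - μ ^ 2)) (Set.Ioo (-1) 1))
    (g g' : ℝ → ℝ) (hsol : IsWeakSol σ d α f g g') :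
    ((∀ᵐ μ ∂(volume.restrict (Set.Ioo (-1:ℝ) 1)), f μ ≤ 0) →
      (∀ᵐ μ ∂(volume.restrict (Set.Ioo (-1:ℝ) 1)), g μ ≤ 0)) ∧
    ((∀ᵐ μ ∂(volume.restrict (Set.Ioo (-1:ℝ) 1)), 0 ≤ f μ) →
      (∀ᵐ μ ∂(volume.restrict (Set.Ioo (-1:ℝ) 1)), 0 ≤ g μ)) :=
  stmt11_general σ d α₀ hα₀ α hα_meas hα_bdd hα_lb f g g' hsol
end

section
/- Let L_Ω be the linearized collision operator as above and let a_∥ M_Ω ∈ 𝕍_Ω be the unique solution (with ∫_{𝕊²} a_∥ M_Ω dω = 0) of −L_Ω(a_∥ M_Ω) = ((ω·Ω) − c₁) M_Ω, where c₁ = ⟨ω·Ω⟩_{M_Ω}. Then the coefficient β = ∫_{𝕊²} a_∥(ω·Ω) M_Ω (ω·Ω) dω is strictly positive. -/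
open Matrix Real
open scoped ContDiff

noncomputable section

/-- Euclidean norm on `ℝ³` (as `Fin 3 → ℝ` with the dot product). -/
def nrm (x : Fin 3 → ℝ) : ℝ := Real.sqrt (x ⬝ᵥ x)

/-- Radial projection onto the unit sphere. -/
def radProj (x : Fin 3 → ℝ) : Fin 3 → ℝ := (nrm x)⁻¹ • x

/-- Tangential (spherical) gradient via the 0-homogeneous extension. -/
def gradS (f : (Fin 3 → ℝ) → ℝ) (x : Fin 3 → ℝ) : Fin 3 → ℝ :=
  fun i => fderiv ℝ (fun y => f (radProj y)) x (Pi.single i 1)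

/-- Surface divergence via the 0-homogeneous extension. -/
def divS (V : (Fin 3 → ℝ) → (Fin 3 → ℝ)) (x : Fin 3 → ℝ) : ℝ :=
  ∑ i, fderiv ℝ (fun y => V (radProj y) i) x (Pi.single i 1)

/-- The linearized collision operator `L φ = d ∇_ω·(M ∇_ω(φ/M))`. -/
def Lop (d : ℝ) (M φ : (Fin 3 → ℝ) → ℝ) (x : Fin 3 → ℝ) : ℝ :=
  d * divS (fun y => M y • gradS (fun z => φ z / M z) y) x

/-- Standard spherical parametrization of `𝕊²`. -/
def sphCoord (θ φ : ℝ) : Fin 3 → ℝ :=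
  ![Real.sin θ * Real.cos φ, Real.sin θ * Real.sin φ, Real.cos θ]

/-- Integral over the unit sphere `∫_{𝕊²} f dω` in spherical coordinates. -/
def Isph (f : (Fin 3 → ℝ) → ℝ) : ℝ :=
  ∫ θ in (0:ℝ)..Real.pi, ∫ φ in (0:ℝ)..(2 * Real.pi), f (sphCoord θ φ) * Real.sin θ

abbrev E3 := Fin 3 → ℝ

lemma dot_expand (x y : E3) : x ⬝ᵥ y = x 0 * y 0 + x 1 * y 1 + x 2 * y 2 := by
  simp [dotProduct, Fin.sum_univ_three]

lemma dot_self_nonneg (x : E3) : 0 ≤ x ⬝ᵥ x := by rw [dot_expand]; nlinarith [sq_nonneg (x 0), sq_nonneg (x 1), sq_nonneg (x 2)]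

lemma dot_self_pos {x : E3} (hx : x ≠ 0) : 0 < x ⬝ᵥ x := by
  rcases (dot_self_nonneg x).lt_or_eq with h | h
  · exact h
  · exfalso
    apply hx
    rw [dot_expand] at h
    have h0 : x 0 * x 0 = 0 := by nlinarith [mul_self_nonneg (x 0), mul_self_nonneg (x 1), mul_self_nonneg (x 2)]
    have h1 : x 1 * x 1 = 0 := by nlinarith [mul_self_nonneg (x 0), mul_self_nonneg (x 1), mul_self_nonneg (x 2)]
    have h2 : x 2 * x 2 = 0 := by nlinarith [mul_self_nonneg (x 0), mul_self_nonneg (x 1), mul_self_nonneg (x 2)]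
    funext i
    fin_cases i <;>
      simp [mul_self_eq_zero.1 h0, mul_self_eq_zero.1 h1, mul_self_eq_zero.1 h2]

lemma nrm_pos {x : E3} (hx : x ≠ 0) : 0 < nrm x := Real.sqrt_pos.2 (dot_self_pos hx)

lemma nrm_one {x : E3} (hx : x ⬝ᵥ x = 1) : nrm x = 1 := by rw [nrm, hx, Real.sqrt_one]

lemma dot_self_of_nrm_one {x : E3} (hx : nrm x = 1) : x ⬝ᵥ x = 1 := by
  have := Real.sq_sqrt (dot_self_nonneg x)
  rw [nrm] at hx
  rw [← this, hx]; norm_num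

lemma ne_zero_of_nrm_one {x : E3} (hx : nrm x = 1) : x ≠ 0 := by
  intro h
  rw [h] at hx
  simp [nrm, dotProduct] at hx

lemma radProj_eq_self {x : E3} (hx : nrm x = 1) : radProj x = x := by
  rw [radProj, hx]; simp

lemma nrm_smul {t : ℝ} (ht : 0 ≤ t) (x : E3) : nrm (t • x) = t * nrm x := by
  rw [nrm, nrm, show (t • x) ⬝ᵥ (t • x) = t ^ 2 * (x ⬝ᵥ x) by
    simp [dot_expand]; ring]
  rw [Real.sqrt_mul (sq_nonneg t), Real.sqrt_sq ht]

lemma radProj_smul {t : ℝ} (ht : 0 < t) {x : E3} (hx : x ≠ 0) :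
    radProj (t • x) = radProj x := by
  rw [radProj, radProj, nrm_smul ht.le, mul_inv, smul_smul]
  congr 1
  rw [mul_right_comm, inv_mul_cancel₀ ht.ne', one_mul]

lemma nrm_radProj {x : E3} (hx : x ≠ 0) : nrm (radProj x) = 1 := by
  rw [radProj, nrm_smul (inv_nonneg.2 (nrm_pos hx).le), inv_mul_cancel₀ (nrm_pos hx).ne']

lemma radProj_ne_zero {x : E3} (hx : x ≠ 0) : radProj x ≠ 0 :=
  ne_zero_of_nrm_one (nrm_radProj hx)

lemma radProj_idem (x : E3) : radProj (radProj x) = radProj x := by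
  by_cases hx : x = 0
  · subst hx
    simp [radProj]
  · exact radProj_eq_self (nrm_radProj hx)

lemma sphCoord_dot_self (θ φ : ℝ) : sphCoord θ φ ⬝ᵥ sphCoord θ φ = 1 := by
  rw [dot_expand]
  simp [sphCoord]
  nlinarith [sin_sq_add_cos_sq θ, sin_sq_add_cos_sq φ]

lemma nrm_sphCoord (θ φ : ℝ) : nrm (sphCoord θ φ) = 1 := nrm_one (sphCoord_dot_self θ φ)

lemma sphCoord_ne_zero (θ φ : ℝ) : sphCoord θ φ ≠ 0 := ne_zero_of_nrm_one (nrm_sphCoord θ φ)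

lemma radProj_sphCoord (θ φ : ℝ) : radProj (sphCoord θ φ) = sphCoord θ φ :=
  radProj_eq_self (nrm_sphCoord θ φ)


/-! ### Euler identity and gradient facts -/

lemma fderiv_ext_self {f : E3 → ℝ} {x : E3} (hx : x ≠ 0)
    (hd : DifferentiableAt ℝ (fun y => f (radProj y)) x) :
    fderiv ℝ (fun y => f (radProj y)) x x = 0 := by
  set F := fun y => f (radProj y) with hF
  have hc : HasDerivAt (fun t : ℝ => t • x) x 1 := by
    simpa using (hasDerivAt_id (1 : ℝ)).smul_const x
  have h1 : HasDerivAt (fun t : ℝ => F (t • x)) (fderiv ℝ F x x) 1 := by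
    have hd' : HasFDerivAt F (fderiv ℝ F x) ((1 : ℝ) • x) := by
      rw [one_smul]; exact hd.hasFDerivAt
    exact hd'.comp_hasDerivAt (l := F) (f := fun t : ℝ => t • x) 1 hc
  have h2 : (fun t : ℝ => F (t • x)) =ᶠ[nhds (1 : ℝ)] fun _ => F x := by
    filter_upwards [Ioi_mem_nhds (by norm_num : (0 : ℝ) < 1)] with t ht
    show f (radProj (t • x)) = f (radProj x)
    rw [radProj_smul ht hx]
  have h3 : HasDerivAt (fun t : ℝ => F (t • x)) 0 1 :=
    (hasDerivAt_const (1 : ℝ) (F x)).congr_of_eventuallyEq h2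
  exact h1.unique h3

lemma sum_single_eq (v : E3) : ∑ i, v i • (Pi.single i (1 : ℝ) : E3) = v := by
  funext j
  simp [Finset.sum_apply, Pi.single_apply, Fin.sum_univ_three]

lemma fderiv_eq_dot {f : E3 → ℝ} {x : E3}
    (hd : DifferentiableAt ℝ (fun y => f (radProj y)) x) (v : E3) :
    fderiv ℝ (fun y => f (radProj y)) x v = gradS f x ⬝ᵥ v := by
  conv_lhs => rw [← sum_single_eq v]
  rw [map_sum]
  simp only [ContinuousLinearMap.map_smul]
  rw [dotProduct_comm, dotProduct]
  rfl

lemma dot_gradS_self {f : E3 → ℝ} {x : E3} (hx : x ≠ 0)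
    (hd : DifferentiableAt ℝ (fun y => f (radProj y)) x) :
    x ⬝ᵥ gradS f x = 0 := by
  rw [dotProduct_comm, ← fderiv_eq_dot hd x, fderiv_ext_self hx hd]

/-! ### Frames -/

def eTh (θ φ : ℝ) : E3 := ![Real.cos θ * Real.cos φ, Real.cos θ * Real.sin φ, -Real.sin θ]
def ePh (φ : ℝ) : E3 := ![-Real.sin φ, Real.cos φ, 0]

lemma frame_complete (θ φ : ℝ) (i : Fin 3) :
    (Pi.single i (1 : ℝ) : E3) =
      sphCoord θ φ i • sphCoord θ φ + eTh θ φ i • eTh θ φ + ePh φ i • ePh φ := by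
  funext j
  have hθ := sin_sq_add_cos_sq θ
  have hφ := sin_sq_add_cos_sq φ
  fin_cases i <;> fin_cases j <;>
    simp [sphCoord, eTh, ePh, Pi.single_apply] <;>
    first
      | ring1
      | linear_combination hθ
      | linear_combination -hθ
      | linear_combination (Real.sin φ * Real.cos φ) * hθ
      | linear_combination (-(Real.sin φ * Real.cos φ)) * hθ
      | linear_combination (-(Real.cos φ * Real.cos φ)) * hθ - hφ
      | linear_combination (-(Real.cos φ * Real.cos φ)) * hθ + hφ
      | linear_combination (Real.cos φ * Real.cos φ) * hθ + hφ
      | linear_combination (-(Real.sin φ * Real.sin φ)) * hθ - hφ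
      | linear_combination (-(Real.sin φ * Real.sin φ)) * hθ + hφ
      | linear_combination (Real.sin φ * Real.sin φ) * hθ + hφ

lemma ePh_deriv_eq (θ φ : ℝ) :
    (![-Real.cos φ, -Real.sin φ, 0] : E3) =
      -(Real.sin θ • sphCoord θ φ + Real.cos θ • eTh θ φ) := by
  funext j
  have hθ := sin_sq_add_cos_sq θ
  fin_cases j <;> simp [sphCoord, eTh] <;>
    first
      | ring1
      | linear_combination (Real.cos φ) * hθ
      | linear_combination (Real.sin φ) * hθ
      | linear_combination (-Real.cos φ) * hθ
      | linear_combination (-Real.sin φ) * hθ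

/-! ### Derivatives of the parametrization -/

lemma hasDerivAt_sphCoord_theta (θ φ : ℝ) :
    HasDerivAt (fun t => sphCoord t φ) (eTh θ φ) θ := by
  rw [hasDerivAt_pi]
  intro i
  fin_cases i <;> simp [sphCoord, eTh]
  · exact (Real.hasDerivAt_sin θ).mul_const _
  · exact (Real.hasDerivAt_sin θ).mul_const _
  · exact Real.hasDerivAt_cos θ

lemma hasDerivAt_sphCoord_phi (θ φ : ℝ) :
    HasDerivAt (fun t => sphCoord θ t) (Real.sin θ • ePh φ) φ := by
  rw [hasDerivAt_pi]
  intro i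
  fin_cases i <;> simp [sphCoord, ePh]
  · simpa [mul_comm, neg_mul, mul_neg] using (Real.hasDerivAt_cos φ).const_mul (Real.sin θ)
  · simpa using (Real.hasDerivAt_sin φ).const_mul (Real.sin θ)
  · exact hasDerivAt_const _ _

lemma hasDerivAt_comp_theta {G : E3 → ℝ} (θ φ : ℝ)
    (hd : DifferentiableAt ℝ G (sphCoord θ φ)) :
    HasDerivAt (fun t => G (sphCoord t φ)) (fderiv ℝ G (sphCoord θ φ) (eTh θ φ)) θ :=
  hd.hasFDerivAt.comp_hasDerivAt θ (hasDerivAt_sphCoord_theta θ φ)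

lemma hasDerivAt_comp_phi {G : E3 → ℝ} (θ φ : ℝ)
    (hd : DifferentiableAt ℝ G (sphCoord θ φ)) :
    HasDerivAt (fun t => G (sphCoord θ t))
      (fderiv ℝ G (sphCoord θ φ) (Real.sin θ • ePh φ)) φ :=
  hd.hasFDerivAt.comp_hasDerivAt φ (hasDerivAt_sphCoord_phi θ φ)


/-! ### Trace identity -/

lemma one_le_inf : (1 : WithTop ℕ∞) ≤ ∞ := by exact_mod_cast (le_top : (1 : ℕ∞) ≤ ⊤)

lemma divS_eq (V : E3 → E3) (θ φ : ℝ)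
    (hd : ∀ i, DifferentiableAt ℝ (fun y => V (radProj y) i) (sphCoord θ φ)) :
    divS V (sphCoord θ φ) =
      (∑ i, eTh θ φ i * fderiv ℝ (fun y => V (radProj y) i) (sphCoord θ φ) (eTh θ φ)) +
      (∑ i, ePh φ i * fderiv ℝ (fun y => V (radProj y) i) (sphCoord θ φ) (ePh φ)) := by
  have hE : ∀ i, fderiv ℝ (fun y => V (radProj y) i) (sphCoord θ φ) (sphCoord θ φ) = 0 :=
    fun i => fderiv_ext_self (f := fun z => V z i) (sphCoord_ne_zero θ φ) (hd i)
  unfold divS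
  rw [← Finset.sum_add_distrib]
  refine Finset.sum_congr rfl fun i _ => ?_
  conv_lhs => rw [frame_complete θ φ i]
  rw [map_add, map_add, ContinuousLinearMap.map_smul, ContinuousLinearMap.map_smul,
    ContinuousLinearMap.map_smul, hE i]
  simp [smul_eq_mul]

/-! ### Component derivatives of the frames -/

lemma hasDerivAt_eTh (θ φ : ℝ) (i : Fin 3) :
    HasDerivAt (fun t => eTh t φ i) (-(sphCoord θ φ i)) θ := by
  fin_cases i <;> simp [eTh, sphCoord]
  · simpa [neg_mul] using (Real.hasDerivAt_cos θ).mul_const (Real.cos φ)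
  · simpa [neg_mul] using (Real.hasDerivAt_cos θ).mul_const (Real.sin φ)
  · exact (Real.hasDerivAt_sin θ).neg

lemma hasDerivAt_ePh (θ φ : ℝ) (i : Fin 3) :
    HasDerivAt (fun t => ePh t i) ((![-Real.cos φ, -Real.sin φ, 0] : E3) i) φ := by
  fin_cases i <;> simp [ePh]
  · exact (Real.hasDerivAt_sin φ).neg
  · exact Real.hasDerivAt_cos φ
  · exact hasDerivAt_const _ _

/-! ### Ingredients for the divergence theorem -/

def sphA (V : E3 → E3) (θ φ : ℝ) : ℝ :=
  Real.sin θ * ∑ i, eTh θ φ i * V (radProj (sphCoord θ φ)) i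

def sphB (V : E3 → E3) (θ φ : ℝ) : ℝ :=
  ∑ i, ePh φ i * V (radProj (sphCoord θ φ)) i

def sphDA (V : E3 → E3) (θ φ : ℝ) : ℝ :=
  Real.cos θ * ∑ i, eTh θ φ i * V (radProj (sphCoord θ φ)) i
    + Real.sin θ * ∑ i, eTh θ φ i * fderiv ℝ (fun y => V (radProj y) i) (sphCoord θ φ) (eTh θ φ)

def sphDB (V : E3 → E3) (θ φ : ℝ) : ℝ :=
  -(Real.cos θ * ∑ i, eTh θ φ i * V (radProj (sphCoord θ φ)) i)
    + Real.sin θ * ∑ i, ePh φ i * fderiv ℝ (fun y => V (radProj y) i) (sphCoord θ φ) (ePh φ)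

section DivIngredients

variable {V : E3 → E3}

lemma tan_sum (htan : ∀ x : E3, nrm x = 1 → x ⬝ᵥ V x = 0) (θ φ : ℝ) :
    ∑ i, sphCoord θ φ i * V (radProj (sphCoord θ φ)) i = 0 := by
  rw [radProj_sphCoord]
  exact htan _ (nrm_sphCoord θ φ)

lemma sphA_hasDeriv (htan : ∀ x : E3, nrm x = 1 → x ⬝ᵥ V x = 0) (θ φ : ℝ)
    (hd : ∀ i, DifferentiableAt ℝ (fun y => V (radProj y) i) (sphCoord θ φ)) :
    HasDerivAt (fun t => sphA V t φ) (sphDA V θ φ) θ := by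
  have hsum : HasDerivAt (fun t => ∑ i, eTh t φ i * V (radProj (sphCoord t φ)) i)
      (∑ i, (-(sphCoord θ φ i) * V (radProj (sphCoord θ φ)) i
        + eTh θ φ i * fderiv ℝ (fun y => V (radProj y) i) (sphCoord θ φ) (eTh θ φ))) θ :=
    HasDerivAt.fun_sum fun i _ =>
      (hasDerivAt_eTh θ φ i).mul (hasDerivAt_comp_theta θ φ (hd i))
  have hmul := (Real.hasDerivAt_sin θ).mul hsum
  have h0 : ∑ i, -(sphCoord θ φ i) * V (radProj (sphCoord θ φ)) i = 0 := by
    simp only [neg_mul]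
    rw [Finset.sum_neg_distrib, tan_sum htan θ φ, neg_zero]
  have hval : Real.cos θ * (∑ i, eTh θ φ i * V (radProj (sphCoord θ φ)) i)
      + Real.sin θ * ∑ i, (-(sphCoord θ φ i) * V (radProj (sphCoord θ φ)) i
        + eTh θ φ i * fderiv ℝ (fun y => V (radProj y) i) (sphCoord θ φ) (eTh θ φ))
      = sphDA V θ φ := by
    rw [Finset.sum_add_distrib, h0, zero_add, sphDA]
  rw [← hval]
  exact hmul

lemma sphB_hasDeriv (htan : ∀ x : E3, nrm x = 1 → x ⬝ᵥ V x = 0) (θ φ : ℝ)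
    (hd : ∀ i, DifferentiableAt ℝ (fun y => V (radProj y) i) (sphCoord θ φ)) :
    HasDerivAt (fun t => sphB V θ t) (sphDB V θ φ) φ := by
  have hsum : HasDerivAt (fun t => ∑ i, ePh t i * V (radProj (sphCoord θ t)) i)
      (∑ i, ((![-Real.cos φ, -Real.sin φ, 0] : E3) i * V (radProj (sphCoord θ φ)) i
        + ePh φ i * fderiv ℝ (fun y => V (radProj y) i) (sphCoord θ φ)
            (Real.sin θ • ePh φ))) φ :=
    HasDerivAt.fun_sum fun i _ =>
      (hasDerivAt_ePh θ φ i).mul (hasDerivAt_comp_phi θ φ (hd i))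
  have hval : (∑ i, ((![-Real.cos φ, -Real.sin φ, 0] : E3) i * V (radProj (sphCoord θ φ)) i
        + ePh φ i * fderiv ℝ (fun y => V (radProj y) i) (sphCoord θ φ)
            (Real.sin θ • ePh φ)))
      = sphDB V θ φ := by
    rw [Finset.sum_add_distrib, sphDB]
    congr 1
    · rw [ePh_deriv_eq θ φ]
      have : ∀ i : Fin 3, (-(Real.sin θ • sphCoord θ φ + Real.cos θ • eTh θ φ)) i
          * V (radProj (sphCoord θ φ)) i
          = -(Real.sin θ * (sphCoord θ φ i * V (radProj (sphCoord θ φ)) i))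
            - Real.cos θ * (eTh θ φ i * V (radProj (sphCoord θ φ)) i) := by
        intro i
        simp [smul_eq_mul]
        ring
      rw [Finset.sum_congr rfl fun i _ => this i, Finset.sum_sub_distrib,
        Finset.sum_neg_distrib, ← Finset.mul_sum, tan_sum htan θ φ, mul_zero, neg_zero,
        zero_sub, ← Finset.mul_sum]
    · rw [Finset.mul_sum]
      refine Finset.sum_congr rfl fun i _ => ?_
      rw [ContinuousLinearMap.map_smul, smul_eq_mul]
      ring
  rw [← hval]
  exact hsum

lemma sphDA_add_sphDB (θ φ : ℝ)
    (hd : ∀ i, DifferentiableAt ℝ (fun y => V (radProj y) i) (sphCoord θ φ)) :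
    sphDA V θ φ + sphDB V θ φ = divS V (sphCoord θ φ) * Real.sin θ := by
  rw [sphDA, sphDB, divS_eq V θ φ hd]
  ring

lemma sphA_bound (V : E3 → E3) (φ : ℝ) : sphA V 0 φ = 0 ∧ sphA V Real.pi φ = 0 := by
  constructor <;> simp [sphA]

lemma sphB_periodic (V : E3 → E3) (θ : ℝ) : sphB V θ (2 * Real.pi) = sphB V θ 0 := by
  have h1 : sphCoord θ (2 * Real.pi) = sphCoord θ 0 := by
    funext i
    fin_cases i <;> simp [sphCoord]
  have h2 : ePh (2 * Real.pi) = ePh 0 := by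
    funext i
    fin_cases i <;> simp [ePh]
  rw [sphB, sphB, h1, h2]

end DivIngredients


/-! ### The divergence theorem on the sphere -/

open MeasureTheory in
lemma divThm (V : E3 → E3)
    (hV : ∀ i, ContDiffOn ℝ ∞ (fun y => V (radProj y) i) {y : E3 | y ≠ 0})
    (htan : ∀ x : E3, nrm x = 1 → x ⬝ᵥ V x = 0) :
    Isph (divS V) = 0 := by
  have hsOpen : IsOpen {y : E3 | y ≠ 0} := isOpen_ne
  have hmem : ∀ θ φ : ℝ, sphCoord θ φ ∈ {y : E3 | y ≠ 0} := fun θ φ => sphCoord_ne_zero θ φ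
  have hdiff : ∀ (θ φ : ℝ) (i : Fin 3),
      DifferentiableAt ℝ (fun y => V (radProj y) i) (sphCoord θ φ) :=
    fun θ φ i => ((hV i).differentiableOn (by simp)).differentiableAt
      (hsOpen.mem_nhds (hmem θ φ))
  have hPcont : Continuous (fun q : ℝ × ℝ => sphCoord q.1 q.2) := by
    apply continuous_pi
    intro i
    fin_cases i <;> simp [sphCoord] <;> fun_prop
  have heThcont : Continuous (fun q : ℝ × ℝ => eTh q.1 q.2) := by
    apply continuous_pi
    intro i
    fin_cases i <;> simp [eTh] <;> fun_prop
  have hePhcont : Continuous (fun q : ℝ × ℝ => ePh q.2) := by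
    apply continuous_pi
    intro i
    fin_cases i <;> simp [ePh] <;> fun_prop
  have hDHc : ∀ (i : Fin 3) (w : ℝ × ℝ → E3), Continuous w →
      Continuous (fun q : ℝ × ℝ =>
        fderiv ℝ (fun y => V (radProj y) i) (sphCoord q.1 q.2) (w q)) := by
    intro i w hw
    have hfc : ContinuousOn (fun x => fderiv ℝ (fun y => V (radProj y) i) x)
        {y : E3 | y ≠ 0} :=
      (((contDiffOn_infty_iff_fderiv_of_isOpen hsOpen).1 (hV i)).2).continuousOn
    exact (hfc.comp_continuous hPcont fun q => hmem q.1 q.2).clm_apply hw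
  have hHc : ∀ i : Fin 3, Continuous (fun q : ℝ × ℝ => V (radProj (sphCoord q.1 q.2)) i) :=
    fun i => ((hV i).continuousOn).comp_continuous hPcont fun q => hmem q.1 q.2
  have hDAc : Continuous (fun q : ℝ × ℝ => sphDA V q.1 q.2) := by
    unfold sphDA
    refine Continuous.add (Continuous.mul (by fun_prop) ?_) (Continuous.mul (by fun_prop) ?_)
    · exact continuous_finset_sum _ fun i _ =>
        (((continuous_apply i).comp heThcont)).mul (hHc i)
    · exact continuous_finset_sum _ fun i _ =>
        (((continuous_apply i).comp heThcont)).mul (hDHc i _ heThcont)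
  have hDBc : Continuous (fun q : ℝ × ℝ => sphDB V q.1 q.2) := by
    unfold sphDB
    refine Continuous.add (Continuous.neg (Continuous.mul (by fun_prop) ?_))
      (Continuous.mul (by fun_prop) ?_)
    · exact continuous_finset_sum _ fun i _ =>
        (((continuous_apply i).comp heThcont)).mul (hHc i)
    · exact continuous_finset_sum _ fun i _ =>
        (((continuous_apply i).comp hePhcont)).mul (hDHc i _ hePhcont)
  have h2π : (0 : ℝ) ≤ 2 * Real.pi := by positivity
  have hπ : (0 : ℝ) ≤ Real.pi := Real.pi_pos.le
  -- inner integral reduces to the DA part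
  have step1 : ∀ θ : ℝ, (∫ φ in (0:ℝ)..(2 * Real.pi), divS V (sphCoord θ φ) * Real.sin θ)
      = ∫ φ in (0:ℝ)..(2 * Real.pi), sphDA V θ φ := by
    intro θ
    have hIA : IntervalIntegrable (fun φ => sphDA V θ φ) volume 0 (2 * Real.pi) :=
      ((hDAc.comp (Continuous.prodMk_right θ))).intervalIntegrable _ _
    have hIB : IntervalIntegrable (fun φ => sphDB V θ φ) volume 0 (2 * Real.pi) :=
      ((hDBc.comp (Continuous.prodMk_right θ))).intervalIntegrable _ _
    rw [intervalIntegral.integral_congr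
      (g := fun φ => sphDA V θ φ + sphDB V θ φ)
      (fun φ _ => (sphDA_add_sphDB θ φ (hdiff θ φ)).symm)]
    rw [intervalIntegral.integral_add hIA hIB]
    have hftc : (∫ φ in (0:ℝ)..(2 * Real.pi), sphDB V θ φ)
        = sphB V θ (2 * Real.pi) - sphB V θ 0 :=
      intervalIntegral.integral_eq_sub_of_hasDerivAt
        (fun t _ => sphB_hasDeriv htan θ t (hdiff θ t)) hIB
    rw [hftc, sphB_periodic, sub_self, add_zero]
  unfold Isph
  rw [intervalIntegral.integral_congr (g := fun θ => ∫ φ in (0:ℝ)..(2 * Real.pi), sphDA V θ φ)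
    (fun θ _ => step1 θ)]
  -- swap the two integrals
  have hswap : (∫ θ in (0:ℝ)..Real.pi, ∫ φ in (0:ℝ)..(2 * Real.pi), sphDA V θ φ)
      = ∫ φ in (0:ℝ)..(2 * Real.pi), ∫ θ in (0:ℝ)..Real.pi, sphDA V θ φ := by
    rw [intervalIntegral.integral_of_le hπ, intervalIntegral.integral_of_le h2π]
    simp_rw [intervalIntegral.integral_of_le h2π, intervalIntegral.integral_of_le hπ]
    apply MeasureTheory.integral_integral_swap
    rw [Measure.prod_restrict]
    have : IntegrableOn (Function.uncurry fun θ φ => sphDA V θ φ)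
        (Set.Icc 0 Real.pi ×ˢ Set.Icc 0 (2 * Real.pi)) (volume.prod volume) := by
      rw [← Measure.volume_eq_prod]
      exact hDAc.continuousOn.integrableOn_compact (isCompact_Icc.prod isCompact_Icc)
    exact this.mono_set (Set.prod_mono Set.Ioc_subset_Icc_self Set.Ioc_subset_Icc_self)
  rw [hswap]
  have hzero : ∀ φ : ℝ, (∫ θ in (0:ℝ)..Real.pi, sphDA V θ φ) = 0 := by
    intro φ
    have hIA : IntervalIntegrable (fun θ => sphDA V θ φ) volume 0 Real.pi :=
      ((hDAc.comp (continuous_id.prodMk continuous_const))).intervalIntegrable _ _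
    have hftc : (∫ θ in (0:ℝ)..Real.pi, sphDA V θ φ)
        = sphA V Real.pi φ - sphA V 0 φ :=
      intervalIntegral.integral_eq_sub_of_hasDerivAt
        (fun t _ => sphA_hasDeriv htan t φ (hdiff t φ)) hIA
    rw [hftc, (sphA_bound V φ).1, (sphA_bound V φ).2, sub_zero]
  rw [intervalIntegral.integral_congr (g := fun _ => (0:ℝ)) (fun φ _ => hzero φ)]
  simp


/-! ### Isph algebra -/

lemma Isph_congr {F G : E3 → ℝ} (h : ∀ x, nrm x = 1 → F x = G x) : Isph F = Isph G := by
  unfold Isph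
  have h' : ∀ θ φ : ℝ, F (sphCoord θ φ) = G (sphCoord θ φ) :=
    fun θ φ => h _ (nrm_sphCoord θ φ)
  simp_rw [h']

lemma Isph_add {F G : E3 → ℝ}
    (hF : Continuous fun q : ℝ × ℝ => F (sphCoord q.1 q.2))
    (hG : Continuous fun q : ℝ × ℝ => G (sphCoord q.1 q.2)) :
    Isph (fun x => F x + G x) = Isph F + Isph G := by
  unfold Isph
  have hFi : ∀ θ : ℝ, IntervalIntegrable (fun φ => F (sphCoord θ φ) * Real.sin θ)
      MeasureTheory.volume 0 (2 * Real.pi) :=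
    fun θ => ((hF.comp (Continuous.prodMk_right θ)).mul continuous_const).intervalIntegrable _ _
  have hGi : ∀ θ : ℝ, IntervalIntegrable (fun φ => G (sphCoord θ φ) * Real.sin θ)
      MeasureTheory.volume 0 (2 * Real.pi) :=
    fun θ => ((hG.comp (Continuous.prodMk_right θ)).mul continuous_const).intervalIntegrable _ _
  have inner : ∀ θ : ℝ,
      (∫ φ in (0:ℝ)..(2 * Real.pi), (F (sphCoord θ φ) + G (sphCoord θ φ)) * Real.sin θ)
      = (∫ φ in (0:ℝ)..(2 * Real.pi), F (sphCoord θ φ) * Real.sin θ)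
        + ∫ φ in (0:ℝ)..(2 * Real.pi), G (sphCoord θ φ) * Real.sin θ := by
    intro θ
    simp_rw [add_mul]
    exact intervalIntegral.integral_add (hFi θ) (hGi θ)
  rw [intervalIntegral.integral_congr (fun θ _ => inner θ)]
  apply intervalIntegral.integral_add
  · refine Continuous.intervalIntegrable ?_ _ _
    exact intervalIntegral.continuous_parametric_intervalIntegral_of_continuous'
      (f := fun θ φ => F (sphCoord θ φ) * Real.sin θ)
      (by exact hF.mul (Real.continuous_sin.comp continuous_fst)) _ _
  · refine Continuous.intervalIntegrable ?_ _ _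
    exact intervalIntegral.continuous_parametric_intervalIntegral_of_continuous'
      (f := fun θ φ => G (sphCoord θ φ) * Real.sin θ)
      (by exact hG.mul (Real.continuous_sin.comp continuous_fst)) _ _

lemma Isph_const_mul (c : ℝ) (F : E3 → ℝ) : Isph (fun x => c * F x) = c * Isph F := by
  unfold Isph
  simp_rw [mul_assoc, intervalIntegral.integral_const_mul]

/-! ### Smoothness infrastructure -/

lemma contDiff_dot_const (w : E3) : ContDiff ℝ ∞ (fun x : E3 => x ⬝ᵥ w) := by
  have h : (fun x : E3 => x ⬝ᵥ w) = fun x : E3 => ∑ i, x i * w i := rfl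
  rw [h]
  exact ContDiff.sum fun i _ =>
    ((ContinuousLinearMap.proj i : E3 →L[ℝ] ℝ).contDiff).mul contDiff_const

lemma contDiff_dot_self : ContDiff ℝ ∞ (fun x : E3 => x ⬝ᵥ x) := by
  have h : (fun x : E3 => x ⬝ᵥ x) = fun x : E3 => ∑ i, x i * x i := rfl
  rw [h]
  exact ContDiff.sum fun i _ =>
    ((ContinuousLinearMap.proj i : E3 →L[ℝ] ℝ).contDiff).mul
      (ContinuousLinearMap.proj i : E3 →L[ℝ] ℝ).contDiff

lemma contDiffAt_nrm {x : E3} (hx : x ≠ 0) : ContDiffAt ℝ ∞ nrm x := by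
  have h2 : ContDiffAt ℝ ∞ (fun y : E3 => Real.sqrt (y ⬝ᵥ y)) x :=
    ContDiffAt.comp (g := fun t : ℝ => Real.sqrt t) x
      (Real.contDiffAt_sqrt (n := ∞) (dot_self_pos hx).ne') contDiff_dot_self.contDiffAt
  exact h2

lemma contDiffAt_radProj {x : E3} (hx : x ≠ 0) : ContDiffAt ℝ ∞ radProj x := by
  have h1 : ContDiffAt ℝ ∞ (fun y : E3 => (nrm y)⁻¹) x :=
    (contDiffAt_nrm hx).inv (nrm_pos hx).ne'
  exact h1.smul contDiffAt_id

lemma contDiffOn_radProj : ContDiffOn ℝ ∞ radProj {y : E3 | y ≠ 0} :=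
  fun _ hx => (contDiffAt_radProj hx).contDiffWithinAt

lemma radProj_mapsTo : Set.MapsTo radProj {y : E3 | y ≠ 0} {y : E3 | y ≠ 0} :=
  fun _ hx => radProj_ne_zero hx

lemma ext_contDiffOn {f : E3 → ℝ} (hf : ContDiffOn ℝ ∞ f {y : E3 | y ≠ 0}) :
    ContDiffOn ℝ ∞ (fun y => f (radProj y)) {y : E3 | y ≠ 0} :=
  hf.comp contDiffOn_radProj radProj_mapsTo

/-! ### Surjectivity of the parametrization -/

set_option maxHeartbeats 1000000 in
lemma sphCoord_surj {x : E3} (hx : nrm x = 1) :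
    ∃ θ φ : ℝ, θ ∈ Set.Icc 0 Real.pi ∧ φ ∈ Set.Icc 0 (2 * Real.pi) ∧ sphCoord θ φ = x := by
  have hd := dot_self_of_nrm_one hx
  rw [dot_expand] at hd
  have hπ := Real.pi_pos
  have h2 : -1 ≤ x 2 ∧ x 2 ≤ 1 := by
    constructor <;> nlinarith [sq_nonneg (x 0), sq_nonneg (x 1), sq_nonneg (x 2)]
  have hθmem : Real.arccos (x 2) ∈ Set.Icc 0 Real.pi :=
    ⟨Real.arccos_nonneg _, Real.arccos_le_pi _⟩
  set θ := Real.arccos (x 2) with hθdef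
  have hcos : Real.cos θ = x 2 := Real.cos_arccos h2.1 h2.2
  have hsin0 : 0 ≤ Real.sin θ := Real.sin_nonneg_of_nonneg_of_le_pi hθmem.1 hθmem.2
  have hsq : Real.sin θ ^ 2 = x 0 * x 0 + x 1 * x 1 := by
    have h := Real.sin_sq_add_cos_sq θ
    rw [hcos] at h
    nlinarith
  by_cases hr : Real.sin θ = 0
  · have h0 : x 0 = 0 ∧ x 1 = 0 := by
      constructor <;> nlinarith [mul_self_nonneg (x 0), mul_self_nonneg (x 1)]
    refine ⟨θ, 0, hθmem, ⟨le_refl 0, by positivity⟩, ?_⟩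
    funext i
    fin_cases i <;> simp [sphCoord, hr, hcos, h0.1, h0.2]
  · have hrpos : 0 < Real.sin θ := lt_of_le_of_ne hsin0 (Ne.symm hr)
    have hab : (x 0 / Real.sin θ) ^ 2 + (x 1 / Real.sin θ) ^ 2 = 1 := by
      field_simp
      nlinarith
    have ha : -1 ≤ x 0 / Real.sin θ ∧ x 0 / Real.sin θ ≤ 1 := by
      constructor <;> nlinarith [sq_nonneg (x 1 / Real.sin θ), sq_nonneg (x 0 / Real.sin θ)]
    by_cases hb : 0 ≤ x 1 / Real.sin θ
    · refine ⟨θ, Real.arccos (x 0 / Real.sin θ), hθmem,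
        ⟨Real.arccos_nonneg _, (Real.arccos_le_pi _).trans (by nlinarith)⟩, ?_⟩
      have hca := Real.cos_arccos ha.1 ha.2
      have hsa : Real.sin (Real.arccos (x 0 / Real.sin θ)) = x 1 / Real.sin θ := by
        rw [Real.sin_arccos,
          show (1:ℝ) - (x 0 / Real.sin θ) ^ 2 = (x 1 / Real.sin θ) ^ 2 by nlinarith,
          Real.sqrt_sq hb]
      funext i
      fin_cases i
      · show Real.sin θ * Real.cos (Real.arccos (x 0 / Real.sin θ)) = x 0
        rw [hca, mul_div_cancel₀ _ hr]
      · show Real.sin θ * Real.sin (Real.arccos (x 0 / Real.sin θ)) = x 1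
        rw [hsa, mul_div_cancel₀ _ hr]
      · exact hcos
    · push_neg at hb
      refine ⟨θ, 2 * Real.pi - Real.arccos (x 0 / Real.sin θ), hθmem,
        ⟨by nlinarith [Real.arccos_le_pi (x 0 / Real.sin θ)],
         by nlinarith [Real.arccos_nonneg (x 0 / Real.sin θ)]⟩, ?_⟩
      have hca : Real.cos (2 * Real.pi - Real.arccos (x 0 / Real.sin θ)) = x 0 / Real.sin θ := by
        rw [Real.cos_two_pi_sub]
        exact Real.cos_arccos ha.1 ha.2
      have hsa : Real.sin (2 * Real.pi - Real.arccos (x 0 / Real.sin θ)) = x 1 / Real.sin θ := by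
        rw [Real.sin_two_pi_sub, Real.sin_arccos,
          show (1:ℝ) - (x 0 / Real.sin θ) ^ 2 = (-(x 1 / Real.sin θ)) ^ 2 by nlinarith,
          Real.sqrt_sq (by linarith : 0 ≤ -(x 1 / Real.sin θ))]
        ring
      funext i
      fin_cases i
      · show Real.sin θ * Real.cos (2 * Real.pi - Real.arccos (x 0 / Real.sin θ)) = x 0
        rw [hca, mul_div_cancel₀ _ hr]
      · show Real.sin θ * Real.sin (2 * Real.pi - Real.arccos (x 0 / Real.sin θ)) = x 1
        rw [hsa, mul_div_cancel₀ _ hr]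
      · exact hcos


lemma sphCoord_cont : Continuous (fun q : ℝ × ℝ => sphCoord q.1 q.2) := by
  apply continuous_pi
  intro i
  fin_cases i <;> simp [sphCoord] <;> fun_prop

/-- Strict positivity of the coefficient `β`: if `ψ = a_∥ M_Ω` is the unique
zero-mean solution of `−L_Ω ψ = ((ω·Ω) − c₁) M_Ω`, where
`c₁ = ∫_{𝕊²} (ω·Ω) M_Ω dω`, then `β = ∫_{𝕊²} ψ (ω·Ω) dω > 0`. -/
theorem stmt18 (σ : ℝ → ℝ) (hσ : ContDiff ℝ (⊤ : ℕ∞) σ) (d C : ℝ) (hd : 0 < d) (hC : 0 < C)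
    (Ω : Fin 3 → ℝ) (hΩ : Ω ⬝ᵥ Ω = 1)
    (M : (Fin 3 → ℝ) → ℝ)
    (hM : M = fun x => C * Real.exp (σ (radProj x ⬝ᵥ Ω) / d))
    (hnorm : Isph M = 1)
    (c₁ : ℝ) (hc₁ : c₁ = Isph (fun x => (x ⬝ᵥ Ω) * M x))
    (ψ : (Fin 3 → ℝ) → ℝ) (hψ : ContDiff ℝ (⊤ : ℕ∞) ψ)
    (hsol : ∀ x, nrm x = 1 → -(Lop d M ψ x) = ((x ⬝ᵥ Ω) - c₁) * M x)
    (hzero : Isph ψ = 0) :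
    0 < Isph (fun x => ψ x * (x ⬝ᵥ Ω)) := by
  have hsOpen : IsOpen {y : E3 | y ≠ 0} := isOpen_ne
  have hπ : (0 : ℝ) ≤ Real.pi := Real.pi_pos.le
  have h2π : (0 : ℝ) ≤ 2 * Real.pi := by positivity
  have hMpos : ∀ x, 0 < M x := by intro x; rw [hM]; positivity
  have hMcd : ContDiffOn ℝ ∞ M {y : E3 | y ≠ 0} := by
    rw [hM]
    refine ContDiffOn.mul contDiffOn_const ?_
    refine (Real.contDiff_exp.of_le le_top).comp_contDiffOn ?_
    refine ContDiffOn.div_const ?_ d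
    exact (hσ.of_le (by simp)).comp_contDiffOn
      ((contDiff_dot_const Ω).comp_contDiffOn contDiffOn_radProj)
  set u : E3 → ℝ := fun z => ψ z / M z with hu
  have hucd : ContDiffOn ℝ ∞ u {y : E3 | y ≠ 0} :=
    ((hψ.of_le (by simp)).contDiffOn).div hMcd fun x _ => (hMpos x).ne'
  have hUcd : ContDiffOn ℝ ∞ (fun y => u (radProj y)) {y : E3 | y ≠ 0} := ext_contDiffOn hucd
  have hUdiff : ∀ x : E3, x ≠ 0 → DifferentiableAt ℝ (fun y => u (radProj y)) x :=
    fun x hx => (hUcd.differentiableOn (by simp)).differentiableAt (hsOpen.mem_nhds hx)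
  have hgrad_cd : ∀ i : Fin 3, ContDiffOn ℝ ∞ (fun x => gradS u x i) {y : E3 | y ≠ 0} := by
    intro i
    have h1 := ((contDiffOn_infty_iff_fderiv_of_isOpen hsOpen).1 hUcd).2
    exact h1.clm_apply contDiffOn_const
  set W : E3 → E3 := fun y => M y • gradS u y with hW
  set T : E3 → E3 := fun y => u y • W y with hT
  have hWext_cd : ∀ i : Fin 3, ContDiffOn ℝ ∞ (fun y => W (radProj y) i) {y : E3 | y ≠ 0} := by
    intro i
    have h1 : ContDiffOn ℝ ∞ (fun y => M (radProj y) * gradS u (radProj y) i)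
        {y : E3 | y ≠ 0} :=
      (ext_contDiffOn hMcd).mul ((hgrad_cd i).comp contDiffOn_radProj radProj_mapsTo)
    exact h1.congr fun y hy => by rw [hW]; simp [smul_eq_mul]
  have hText_cd : ∀ i : Fin 3, ContDiffOn ℝ ∞ (fun y => T (radProj y) i) {y : E3 | y ≠ 0} := by
    intro i
    have h1 : ContDiffOn ℝ ∞ (fun y => u (radProj y) * W (radProj y) i) {y : E3 | y ≠ 0} :=
      (ext_contDiffOn hucd).mul (hWext_cd i)
    exact h1.congr fun y hy => by rw [hT]; simp [smul_eq_mul]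
  have hWdiff : ∀ (x : E3), x ≠ 0 → ∀ i : Fin 3,
      DifferentiableAt ℝ (fun y => W (radProj y) i) x :=
    fun x hx i => ((hWext_cd i).differentiableOn (by simp)).differentiableAt
      (hsOpen.mem_nhds hx)
  have hTtan : ∀ x : E3, nrm x = 1 → x ⬝ᵥ T x = 0 := by
    intro x hx
    have hx0 := ne_zero_of_nrm_one hx
    rw [hT, hW]
    rw [dotProduct_smul, dotProduct_smul, dot_gradS_self hx0 (hUdiff x hx0)]
    simp
  -- the key pointwise identity on the sphere
  have hLop : ∀ x : E3, Lop d M ψ x = d * divS W x := by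
    intro x
    rw [hW, hu]
    rfl
  have key : ∀ x : E3, nrm x = 1 →
      ψ x * (x ⬝ᵥ Ω) = -d * divS T x
        + (d * (M x * (gradS u x ⬝ᵥ gradS u x)) + c₁ * ψ x) := by
    intro x hx
    have hx0 := ne_zero_of_nrm_one hx
    have hrx : radProj x = x := radProj_eq_self hx
    have hψx : u x * M x = ψ x := by rw [hu]; exact div_mul_cancel₀ _ (hMpos x).ne'
    have hprod : divS T x = u x * divS W x + M x * (gradS u x ⬝ᵥ gradS u x) := by
      have hTW : ∀ i : Fin 3, (fun y => T (radProj y) i)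
          = fun y => u (radProj y) * W (radProj y) i := by
        intro i; funext y; rw [hT]; simp [smul_eq_mul]
      unfold divS
      have hstep : ∀ i : Fin 3, fderiv ℝ (fun y => T (radProj y) i) x (Pi.single i 1)
          = u x * fderiv ℝ (fun y => W (radProj y) i) x (Pi.single i 1)
            + W x i * gradS u x i := by
        intro i
        rw [hTW i, fderiv_fun_mul (hUdiff x hx0) (hWdiff x hx0 i)]
        simp only [ContinuousLinearMap.add_apply, ContinuousLinearMap.coe_smul',
          Pi.smul_apply, smul_eq_mul, hrx, gradS]
      rw [Finset.sum_congr rfl fun i _ => hstep i, Finset.sum_add_distrib, ← Finset.mul_sum]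
      congr 1
      rw [hW]
      simp only [Pi.smul_apply, smul_eq_mul]
      rw [dotProduct, Finset.mul_sum]
      exact Finset.sum_congr rfl fun i _ => by ring
    have hmain : u x * (-(d * divS W x)) = u x * (((x ⬝ᵥ Ω) - c₁) * M x) := by
      rw [← hLop x, hsol x hx]
    linear_combination d * hprod - hmain + (c₁ - (x ⬝ᵥ Ω)) * hψx
  -- continuity facts
  have hgc : ∀ i : Fin 3, Continuous fun q : ℝ × ℝ => gradS u (sphCoord q.1 q.2) i :=
    fun i => (hgrad_cd i).continuousOn.comp_continuous sphCoord_cont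
      fun q => sphCoord_ne_zero q.1 q.2
  have hMc : Continuous fun q : ℝ × ℝ => M (sphCoord q.1 q.2) :=
    hMcd.continuousOn.comp_continuous sphCoord_cont fun q => sphCoord_ne_zero q.1 q.2
  have hg_cont : Continuous fun q : ℝ × ℝ =>
      M (sphCoord q.1 q.2) * (gradS u (sphCoord q.1 q.2) ⬝ᵥ gradS u (sphCoord q.1 q.2)) := by
    have hdot : (fun q : ℝ × ℝ =>
        gradS u (sphCoord q.1 q.2) ⬝ᵥ gradS u (sphCoord q.1 q.2))
        = fun q : ℝ × ℝ => ∑ i, gradS u (sphCoord q.1 q.2) i * gradS u (sphCoord q.1 q.2) i :=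
      rfl
    exact hMc.mul (by rw [hdot]; exact continuous_finset_sum _ fun i _ => (hgc i).mul (hgc i))
  have hψc : Continuous fun q : ℝ × ℝ => ψ (sphCoord q.1 q.2) :=
    (hψ.of_le ((by simp) : ∞ ≤ _)).continuous.comp sphCoord_cont
  have hdivT_cont : Continuous fun q : ℝ × ℝ => divS T (sphCoord q.1 q.2) := by
    unfold divS
    refine continuous_finset_sum _ fun i _ => ?_
    have hfc : ContinuousOn (fun x => fderiv ℝ (fun y => T (radProj y) i) x)
        {y : E3 | y ≠ 0} :=
      ((contDiffOn_infty_iff_fderiv_of_isOpen hsOpen).1 (hText_cd i)).2.continuousOn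
    exact (hfc.comp_continuous sphCoord_cont
      fun q => sphCoord_ne_zero q.1 q.2).clm_apply continuous_const
  -- split the integral
  have e1 : Isph (fun x => ψ x * (x ⬝ᵥ Ω))
      = Isph (fun x => -d * divS T x)
        + (Isph (fun x => d * (M x * (gradS u x ⬝ᵥ gradS u x))) + Isph (fun x => c₁ * ψ x)) := by
    rw [Isph_congr key]
    rw [Isph_add (continuous_const.mul hdivT_cont)
      ((continuous_const.mul hg_cont).add (continuous_const.mul hψc))]
    rw [Isph_add (continuous_const.mul hg_cont) (continuous_const.mul hψc)]
  have e2 : Isph (fun x => -d * divS T x) = 0 := by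
    rw [Isph_const_mul, divThm T hText_cd hTtan, mul_zero]
  have e3 : Isph (fun x => c₁ * ψ x) = 0 := by
    rw [Isph_const_mul, hzero, mul_zero]
  rw [e1, e2, e3, Isph_const_mul, zero_add, add_zero]
  -- strict positivity
  refine mul_pos hd ?_
  -- there is a point on the sphere where the gradient does not vanish
  have hex : ∃ x : E3, nrm x = 1 ∧ gradS u x ≠ 0 := by
    by_contra hcon
    push_neg at hcon
    have hLzero : ∀ x : E3, nrm x = 1 → Lop d M ψ x = 0 := by
      intro x hx
      have hx0 := ne_zero_of_nrm_one hx
      have hzW : ∀ i : Fin 3, fderiv ℝ (fun y => W (radProj y) i) x = 0 := by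
        intro i
        have hev : (fun y => W (radProj y) i) =ᶠ[nhds x] fun _ => (0 : ℝ) := by
          filter_upwards [hsOpen.mem_nhds hx0] with y hy
          have hz : gradS u (radProj y) = 0 := hcon _ (nrm_radProj hy)
          rw [hW]
          simp [hz]
        rw [hev.fderiv_eq, fderiv_fun_const]
        rfl
      rw [hLop]
      unfold divS
      simp only [hzW]
      simp
    have h1 := hsol Ω (nrm_one hΩ)
    have hΩ2 : (-Ω) ⬝ᵥ (-Ω) = 1 := by rw [neg_dotProduct, dotProduct_neg, hΩ]; ring
    have h2 := hsol (-Ω) (nrm_one hΩ2)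
    rw [hLzero Ω (nrm_one hΩ), neg_zero, hΩ] at h1
    rw [hLzero (-Ω) (nrm_one hΩ2), neg_zero, neg_dotProduct, hΩ] at h2
    have hM1 := hMpos Ω
    have hM2 := hMpos (-Ω)
    have e1' : (1 : ℝ) - c₁ = 0 := by
      rcases mul_eq_zero.1 h1.symm with h | h
      · exact h
      · exact absurd h hM1.ne'
    have e2' : (-1 : ℝ) - c₁ = 0 := by
      rcases mul_eq_zero.1 h2.symm with h | h
      · exact h
      · exact absurd h hM2.ne'
    linarith
  obtain ⟨x₀, hx₀u, hx₀g⟩ := hex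
  obtain ⟨θ₀, φ₀, hθ₀, hφ₀, hx₀eq⟩ := sphCoord_surj hx₀u
  have hgradc : Continuous fun q : ℝ × ℝ => gradS u (sphCoord q.1 q.2) :=
    continuous_pi fun i => hgc i
  have hNopen : IsOpen {q : ℝ × ℝ | gradS u (sphCoord q.1 q.2) ≠ 0} :=
    isOpen_ne.preimage hgradc
  have hq₀N : (θ₀, φ₀) ∈ {q : ℝ × ℝ | gradS u (sphCoord q.1 q.2) ≠ 0} := by
    show gradS u (sphCoord θ₀ φ₀) ≠ 0
    rw [hx₀eq]
    exact hx₀g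
  have hq₀cl : (θ₀, φ₀) ∈ closure ((Set.Ioo (0:ℝ) Real.pi) ×ˢ (Set.Ioo (0:ℝ) (2 * Real.pi))) := by
    rw [closure_prod_eq, closure_Ioo Real.pi_pos.ne, closure_Ioo (by positivity : (0:ℝ) ≠ 2 * Real.pi)]
    exact ⟨hθ₀, hφ₀⟩
  obtain ⟨q₁, hq₁N, hq₁S⟩ := mem_closure_iff.1 hq₀cl _ hNopen hq₀N
  -- convert to a set integral on the product and conclude positivity
  set G : ℝ × ℝ → ℝ := fun q =>
    M (sphCoord q.1 q.2) * (gradS u (sphCoord q.1 q.2) ⬝ᵥ gradS u (sphCoord q.1 q.2))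
      * Real.sin q.1 with hGdef
  have hGcont : Continuous G := hg_cont.mul (Real.continuous_sin.comp continuous_fst)
  have hSmeas : MeasurableSet ((Set.Ioc (0:ℝ) Real.pi) ×ˢ (Set.Ioc (0:ℝ) (2 * Real.pi))) :=
    measurableSet_Ioc.prod measurableSet_Ioc
  have hInt : MeasureTheory.IntegrableOn G
      ((Set.Ioc (0:ℝ) Real.pi) ×ˢ (Set.Ioc (0:ℝ) (2 * Real.pi))) := by
    refine MeasureTheory.IntegrableOn.mono_set ?_
      (Set.prod_mono Set.Ioc_subset_Icc_self Set.Ioc_subset_Icc_self)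
    exact hGcont.continuousOn.integrableOn_compact (isCompact_Icc.prod isCompact_Icc)
  have hIg_eq : Isph (fun x => M x * (gradS u x ⬝ᵥ gradS u x))
      = ∫ q in (Set.Ioc (0:ℝ) Real.pi) ×ˢ (Set.Ioc (0:ℝ) (2 * Real.pi)), G q := by
    unfold Isph
    rw [intervalIntegral.integral_of_le hπ]
    simp_rw [intervalIntegral.integral_of_le h2π]
    rw [show (MeasureTheory.volume : MeasureTheory.Measure (ℝ × ℝ))
      = MeasureTheory.volume.prod MeasureTheory.volume from MeasureTheory.Measure.volume_eq_prod ℝ ℝ]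
    rw [MeasureTheory.setIntegral_prod _ (by
      rw [← MeasureTheory.Measure.volume_eq_prod ℝ ℝ]
      exact hInt)]
  rw [hIg_eq]
  have hnonneg : 0 ≤ᵐ[MeasureTheory.volume.restrict
      ((Set.Ioc (0:ℝ) Real.pi) ×ˢ (Set.Ioc (0:ℝ) (2 * Real.pi)))] G := by
    refine (MeasureTheory.ae_restrict_iff' hSmeas).2 (MeasureTheory.ae_of_all _ fun q hq => ?_)
    have hs : 0 ≤ Real.sin q.1 := Real.sin_nonneg_of_nonneg_of_le_pi hq.1.1.le hq.1.2
    exact mul_nonneg (mul_nonneg (hMpos _).le (dot_self_nonneg _)) hs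
  rw [MeasureTheory.setIntegral_pos_iff_support_of_nonneg_ae hnonneg hInt]
  have hq₁G : G q₁ ≠ 0 := by
    have hs : 0 < Real.sin q₁.1 := Real.sin_pos_of_pos_of_lt_pi hq₁S.1.1 hq₁S.1.2
    exact (mul_pos (mul_pos (hMpos _) (dot_self_pos hq₁N)) hs).ne'
  have hUopen : IsOpen (Function.support G ∩
      ((Set.Ioo (0:ℝ) Real.pi) ×ˢ (Set.Ioo (0:ℝ) (2 * Real.pi)))) := by
    refine IsOpen.inter ?_ ((isOpen_Ioo).prod (isOpen_Ioo))
    have : Function.support G = G ⁻¹' {y : ℝ | y ≠ 0} := rfl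
    rw [this]
    exact isOpen_ne.preimage hGcont
  have hle : Function.support G ∩ ((Set.Ioo (0:ℝ) Real.pi) ×ˢ (Set.Ioo (0:ℝ) (2 * Real.pi)))
      ⊆ Function.support G ∩ ((Set.Ioc (0:ℝ) Real.pi) ×ˢ (Set.Ioc (0:ℝ) (2 * Real.pi))) :=
    Set.inter_subset_inter_right _
      (Set.prod_mono Set.Ioo_subset_Ioc_self Set.Ioo_subset_Ioc_self)
  calc (0 : ENNReal) < MeasureTheory.volume (Function.support G ∩
      ((Set.Ioo (0:ℝ) Real.pi) ×ˢ (Set.Ioo (0:ℝ) (2 * Real.pi)))) :=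
        hUopen.measure_pos _ ⟨q₁, hq₁G, hq₁S⟩
    _ ≤ MeasureTheory.volume (Function.support G ∩
      ((Set.Ioc (0:ℝ) Real.pi) ×ˢ (Set.Ioc (0:ℝ) (2 * Real.pi)))) := MeasureTheory.measure_mono hle

end
end
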